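/- arXiv:1511.01439 — 2 statements merged into one kernel-verified Lean document; each statement's English description precedes it below -/
import Mathlib

section
/- Let Φ : ℝ^d → ℝ be smooth and let V be an open set on which M_k := Σ_{2 ≤ |α| ≤ k} sup_{ξ∈V} |∂^α Φ(ξ)| < ∞. Then for every multi-index α with |α| ≥ 1 there exists a nondecreasing function F : [0,∞) → [0,∞) (depending only on d and |α|) such that for every ξ ∈ V with 0 < |∇Φ(ξ)| ≤ 2 one has |∂^α (|∇Φ|)(ξ)| ≤ F(M_{|α|+1}) |∇Φ(ξ)|^{1−|α|}, where |∇Φ| denotes the function ξ ↦ |∇Φ(ξ)|. -/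
/-!
The norm is smooth away from the origin and positively homogeneous of degree one, so its `i`-th
derivative is homogeneous of degree `1 - i`; by compactness of the unit sphere it is bounded by
`Kᵢ ‖v‖ ^ (1 - i)`, and for `‖v‖ ≤ 2` all of these are `O(‖v‖ ^ (1 - n))` when `i ≤ n`.
On the open set where `∇Φ ≠ 0`, the chain-rule bound `norm_iteratedFDerivWithin_comp_le` for
`‖·‖ ∘ ∇Φ` combines this with the bounds on the derivatives of `∇Φ`, which are derivatives of
order at least two of `Φ` and hence controlled by `phaseSemi`.
-/

noncomputable def phaseSemi (d k : ℕ) (V : Set (EuclideanSpace ℝ (Fin d)))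
    (Φ : EuclideanSpace ℝ (Fin d) → ℝ) : ℝ :=
  ∑ n ∈ Finset.Icc 2 k, sSup ((fun ξ => ‖iteratedFDeriv ℝ n Φ ξ‖) '' V)

open Set Nat

section NormDerivatives

variable {E : Type*} [NormedAddCommGroup E] [InnerProductSpace ℝ E]

theorem contDiffOn_norm_compl_zero {n : WithTop ℕ∞} :
    ContDiffOn ℝ n (fun w : E => ‖w‖) {0}ᶜ := fun _ hv =>
  (contDiffAt_norm ℝ hv).contDiffWithinAt

theorem norm_iteratedFDerivWithin_norm_smul (i : ℕ) {r : ℝ} (hr : 0 < r) {v : E} (hv : v ≠ 0) :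
    r ^ i * ‖iteratedFDerivWithin ℝ i (fun w : E => ‖w‖) {0}ᶜ (r • v)‖ =
      r * ‖iteratedFDerivWithin ℝ i (fun w : E => ‖w‖) {0}ᶜ v‖ := by
  set e : E ≃L[ℝ] E := ContinuousLinearEquiv.smulLeft (Units.mk0 r hr.ne')
  have he : ∀ w, e w = r • w := fun _ => rfl
  have hpre : e ⁻¹' {0}ᶜ = {0}ᶜ := by ext w; simp [he, hr.ne']
  have hcomp : (fun w : E => ‖w‖) ∘ e = r • fun w : E => ‖w‖ := by
    funext w; simp [he, norm_smul, abs_of_pos hr]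
  have key := e.iteratedFDerivWithin_comp_right (fun w : E => ‖w‖)
    isOpen_compl_singleton.uniqueDiffOn (s := {0}ᶜ) (x := v) (by simp [he, hr.ne', hv]) i
  rw [hpre, hcomp, iteratedFDerivWithin_const_smul_apply (contDiffOn_norm_compl_zero v hv)
    isOpen_compl_singleton.uniqueDiffOn hv, he] at key
  have hscale : (iteratedFDerivWithin ℝ i (fun w : E => ‖w‖) {0}ᶜ (r • v)).compContinuousLinearMap
      (fun _ => (e : E →L[ℝ] E)) =
        r ^ i • iteratedFDerivWithin ℝ i (fun w : E => ‖w‖) {0}ᶜ (r • v) := by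
    ext m
    simp [he, ContinuousMultilinearMap.map_smul_univ]
  have := congrArg norm key
  rw [hscale, norm_smul, norm_smul, Real.norm_of_nonneg hr.le,
    Real.norm_of_nonneg (by positivity)] at this
  exact this.symm

variable [FiniteDimensional ℝ E]

theorem exists_norm_iteratedFDerivWithin_norm_le (i : ℕ) :
    ∃ K, ∀ v : E, v ≠ 0 →
      ‖iteratedFDerivWithin ℝ i (fun w : E => ‖w‖) {0}ᶜ v‖ ≤ K * ‖v‖ ^ (1 - i : ℤ) := by
  have hsphere : Metric.sphere (0 : E) 1 ⊆ {0}ᶜ := fun u hu h => by simp_all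
  obtain ⟨K, hK⟩ := (isCompact_sphere (0 : E) 1).exists_bound_of_continuousOn
    ((contDiffOn_norm_compl_zero.continuousOn_iteratedFDerivWithin le_rfl
      isOpen_compl_singleton.uniqueDiffOn).mono hsphere)
  refine ⟨K, fun v hv => ?_⟩
  have hr : 0 < ‖v‖ := norm_pos_iff.2 hv
  set u := ‖v‖⁻¹ • v
  have hu : ‖u‖ = 1 := by simp [u, norm_smul, hr.ne']
  have hvu : v = ‖v‖ • u := by simp [u, smul_smul, hr.ne']
  have hscale := norm_iteratedFDerivWithin_norm_smul i hr (v := u) (by simp [← norm_pos_iff, hu])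
  rw [← hvu] at hscale
  have hKu := hK u (by simp [hu])
  rw [zpow_sub₀ hr.ne', zpow_one, zpow_natCast, mul_div_assoc', le_div_iff₀ (by positivity),
    mul_comm, hscale, mul_comm]
  gcongr

theorem exists_norm_iteratedFDerivWithin_norm_le_of_norm_le (n : ℕ) (R : ℝ) :
    ∃ C, 0 ≤ C ∧ ∀ i ≤ n, ∀ v : E, v ≠ 0 → ‖v‖ ≤ R →
      ‖iteratedFDerivWithin ℝ i (fun w : E => ‖w‖) {0}ᶜ v‖ ≤ C * ‖v‖ ^ (1 - n : ℤ) := by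
  choose K hK using exists_norm_iteratedFDerivWithin_norm_le (E := E)
  refine ⟨∑ i ∈ Finset.range (n + 1), |K i| * |R| ^ (n - i), by positivity, fun i hi v hv hvR => ?_⟩
  have hr : 0 < ‖v‖ := norm_pos_iff.2 hv
  have hexp : (1 - i : ℤ) = (1 - n : ℤ) + (n - i : ℕ) := by push_cast [Nat.cast_sub hi]; ring
  calc ‖iteratedFDerivWithin ℝ i (fun w : E => ‖w‖) {0}ᶜ v‖
      ≤ K i * ‖v‖ ^ (1 - i : ℤ) := hK i v hv
    _ ≤ |K i| * |R| ^ (n - i) * ‖v‖ ^ (1 - n : ℤ) := by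
      rw [hexp, zpow_add₀ hr.ne', zpow_natCast, mul_comm (‖v‖ ^ (1 - n : ℤ)), ← mul_assoc]
      gcongr
      · exact le_abs_self _
      · exact hvR.trans (le_abs_self R)
    _ ≤ _ := by
      gcongr
      exact Finset.single_le_sum (f := fun i => |K i| * |R| ^ (n - i))
        (fun _ _ => by positivity) (Finset.mem_range.2 (Nat.lt_succ_of_le hi))

end NormDerivatives

section Gradient

variable {E : Type*} [NormedAddCommGroup E] [InnerProductSpace ℝ E] [CompleteSpace E]

theorem ContDiff.gradient {f : E → ℝ} {n : WithTop ℕ∞} (hf : ContDiff ℝ (n + 1) f) :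
    ContDiff ℝ n (gradient f) :=
  (InnerProductSpace.toDual ℝ E).symm.contDiff.comp (hf.fderiv_right le_rfl)

theorem norm_iteratedFDeriv_gradient (f : E → ℝ) (i : ℕ) (x : E) :
    ‖iteratedFDeriv ℝ i (gradient f) x‖ = ‖iteratedFDeriv ℝ (i + 1) f x‖ := by
  rw [← norm_iteratedFDeriv_fderiv]
  exact (InnerProductSpace.toDual ℝ E).symm.norm_iteratedFDeriv_comp_left (fderiv ℝ f) x i

end Gradient

theorem norm_iteratedFDeriv_le_phaseSemi {d m k : ℕ} {V : Set (EuclideanSpace ℝ (Fin d))}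
    {Φ : EuclideanSpace ℝ (Fin d) → ℝ}
    (hbdd : BddAbove ((fun ξ => ‖iteratedFDeriv ℝ k Φ ξ‖) '' V)) (hk : k ∈ Finset.Icc 2 m)
    {ξ : EuclideanSpace ℝ (Fin d)} (hξ : ξ ∈ V) :
    ‖iteratedFDeriv ℝ k Φ ξ‖ ≤ phaseSemi d m V Φ :=
  (le_csSup hbdd (mem_image_of_mem _ hξ)).trans <|
    Finset.single_le_sum (f := fun k => sSup ((fun ξ => ‖iteratedFDeriv ℝ k Φ ξ‖) '' V))
      (fun _ _ => Real.sSup_nonneg (by rintro _ ⟨_, _, rfl⟩; positivity)) hk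

theorem stmt11_general (d n : ℕ) :
    ∃ F : ℝ → ℝ, Monotone F ∧ (∀ x, 0 ≤ F x) ∧
      ∀ (Φ : EuclideanSpace ℝ (Fin d) → ℝ) (V : Set (EuclideanSpace ℝ (Fin d))),
        ContDiff ℝ (⊤ : ℕ∞) Φ → IsOpen V →
        (∀ k ∈ Finset.Icc 2 (n + 1),
          BddAbove ((fun ξ => ‖iteratedFDeriv ℝ k Φ ξ‖) '' V)) →
        ∀ ξ ∈ V, 0 < ‖gradient Φ ξ‖ → ‖gradient Φ ξ‖ ≤ 2 →
          ‖iteratedFDeriv ℝ n (fun η => ‖gradient Φ η‖) ξ‖ ≤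
            F (phaseSemi d (n + 1) V Φ) * ‖gradient Φ ξ‖ ^ ((1 : ℤ) - n) := by
  obtain ⟨C, hC0, hC⟩ :=
    exists_norm_iteratedFDerivWithin_norm_le_of_norm_le (E := EuclideanSpace ℝ (Fin d)) n 2
  refine ⟨fun M => n ! * C * max 1 M ^ n, fun a b hab => by dsimp only; gcongr,
    fun M => by positivity, fun Φ V hΦ _ hbdd ξ hξ hpos hle => ?_⟩
  set M := phaseSemi d (n + 1) V Φ
  have hG : ContDiff ℝ n (gradient Φ) := (hΦ.of_le (by exact_mod_cast le_top)).gradient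
  set s := gradient Φ ⁻¹' {0}ᶜ
  have hs : IsOpen s := isOpen_compl_singleton.preimage hG.continuous
  have hξs : ξ ∈ s := norm_pos_iff.1 hpos
  have hD : ∀ i, 1 ≤ i → i ≤ n → ‖iteratedFDerivWithin ℝ i (gradient Φ) s ξ‖ ≤ max 1 M ^ i := by
    intro i hi1 hin
    have hmem : i + 1 ∈ Finset.Icc 2 (n + 1) := Finset.mem_Icc.2 ⟨by omega, by omega⟩
    rw [iteratedFDerivWithin_of_isOpen i hs hξs, norm_iteratedFDeriv_gradient]
    exact (norm_iteratedFDeriv_le_phaseSemi (hbdd _ hmem) hmem hξ).trans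
      ((le_max_right 1 M).trans (le_self_pow₀ (le_max_left 1 M) (by omega)))
  calc ‖iteratedFDeriv ℝ n (fun η => ‖gradient Φ η‖) ξ‖
      = ‖iteratedFDerivWithin ℝ n ((fun w => ‖w‖) ∘ gradient Φ) s ξ‖ := by
        rw [iteratedFDerivWithin_of_isOpen n hs hξs]; rfl
    _ ≤ n ! * (C * ‖gradient Φ ξ‖ ^ ((1 : ℤ) - n)) * max 1 M ^ n :=
        norm_iteratedFDerivWithin_comp_le contDiffOn_norm_compl_zero hG.contDiffOn le_rfl
          isOpen_compl_singleton.uniqueDiffOn hs.uniqueDiffOn (fun _ hx => hx) hξs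
          (fun i hi => hC i hi _ hξs hle) hD
    _ = n ! * C * max 1 M ^ n * ‖gradient Φ ξ‖ ^ ((1 : ℤ) - n) := by ring

theorem stmt11 (d n : ℕ) (hn : 1 ≤ n) :
    ∃ F : ℝ → ℝ, Monotone F ∧ (∀ x, 0 ≤ F x) ∧
      ∀ (Φ : EuclideanSpace ℝ (Fin d) → ℝ) (V : Set (EuclideanSpace ℝ (Fin d))),
        ContDiff ℝ (⊤ : ℕ∞) Φ → IsOpen V →
        (∀ k ∈ Finset.Icc 2 (n + 1),
          BddAbove ((fun ξ => ‖iteratedFDeriv ℝ k Φ ξ‖) '' V)) →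
        ∀ ξ ∈ V, 0 < ‖gradient Φ ξ‖ → ‖gradient Φ ξ‖ ≤ 2 →
          ‖iteratedFDeriv ℝ n (fun η => ‖gradient Φ η‖) ξ‖ ≤
            F (phaseSemi d (n + 1) V Φ) * ‖gradient Φ ξ‖ ^ ((1 : ℤ) - n) :=
  stmt11_general d n
end

section
/- Let Φ : ℝ^d → ℝ be smooth, V an open set with M_k := Σ_{2 ≤ |α| ≤ k} sup_{ξ∈V} |∂^α Φ(ξ)| < ∞ (convention M_1 = 1), and A = ∇Φ/|∇Φ|² on U := {ξ ∈ V : ∇Φ(ξ) ≠ 0}. Let T denote the first-order differential operator (the transpose of L = A·∇) defined by (T f)(ξ) = Σ_{i=1}^d ∂_i (A_i f)(ξ) for smooth f on U. Then for every N ∈ ℕ, N ≥ 1, there exist smooth functions c_{α,N} on U, indexed by multi-indices |α| ≤ N, such that: (1) T^N f = Σ_{|α| ≤ N} c_{α,N} ∂^α f for every smooth f on U; and (2) for every multi-index β there is a nondecreasing function F : [0,∞) → [0,∞) (depending only on d, N, α, β) with |∂^β c_{α,N}(ξ)| ≤ F(M_{N−|α|+|β|+1}) Σ_{k=N}^{2N−|α|+|β|}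 |∇Φ(ξ)|^{-k} for all ξ ∈ U. -/
/-- Partial derivative in the `i`-th coordinate direction. -/
noncomputable def pderiv' (d : ℕ) (i : Fin d) (f : EuclideanSpace ℝ (Fin d) → ℝ) :
    EuclideanSpace ℝ (Fin d) → ℝ :=
  fun ξ => fderiv ℝ f ξ (EuclideanSpace.single i 1)

/-- Iterated partial derivative along a list of coordinate directions. -/
noncomputable def mderiv (d : ℕ) : List (Fin d) →
    (EuclideanSpace ℝ (Fin d) → ℝ) → EuclideanSpace ℝ (Fin d) → ℝ
  | [], f => f
  | i :: l, f => pderiv' d i (mderiv d l f)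

/-- The list of directions associated to a multi-index `α`. -/
def mIdxList (d N : ℕ) (α : Fin d → Fin (N + 1)) : List (Fin d) :=
  (List.finRange d).flatMap fun i => List.replicate (α i : ℕ) i

/-- ∂^α, for a multi-index `α : Fin d → Fin (N+1)`. -/
noncomputable def mderivIdx (d N : ℕ) (α : Fin d → Fin (N + 1))
    (f : EuclideanSpace ℝ (Fin d) → ℝ) : EuclideanSpace ℝ (Fin d) → ℝ :=
  mderiv d (mIdxList d N α) f

/-- The transpose operator `T f = Σᵢ ∂ᵢ (Aᵢ f)` with `Aᵢ = ∂ᵢΦ/|∇Φ|²`. -/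
noncomputable def transpOp (d : ℕ) (Φ : EuclideanSpace ℝ (Fin d) → ℝ)
    (f : EuclideanSpace ℝ (Fin d) → ℝ) : EuclideanSpace ℝ (Fin d) → ℝ :=
  fun ξ => ∑ i, pderiv' d i
    (fun η => fderiv ℝ Φ η (EuclideanSpace.single i 1) / ‖gradient Φ η‖ ^ 2 * f η) ξ

/-!
Write `A_i = ∂_iΦ / |∇Φ|²`, so that `T g = Σ_i ∂_i (A_i g)`. If `T^n f = Σ_α c_α ∂^α f`, the
Leibniz rule gives `T^(n+1) f = Σ_α (Σ_i ∂_i (A_i c_α)) ∂^α f + Σ_{i,β} A_i c_β ∂_i ∂^β f`, and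
`∂_i ∂^β = ∂^(β + e_i)`; this defines the coefficients recursively.

For the estimates, consider bounds `‖D^k c‖ ≤ F(M_(m+k)) Σ_{j=lo}^{hi+k} |∇Φ|^(-j)` for all `k ≤ n`,
with `F` monotone and independent of `Φ`. They survive sums, products (Leibniz: the `lo`, `hi`
add up and `m` becomes the maximum) and a partial derivative (which shifts `hi` and `m` by one).
`|∇Φ|^(-2)` and the `A_j` satisfy them with `(lo, hi, m) = (2, 2, 1)` and `(1, 1, 1)`, by
induction on `n`: their first partial derivatives are polynomials in `|∇Φ|^(-2)`, the `A_k`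
and the second derivatives of `Φ`. Induction on the number of iterations then bounds the
coefficients.
-/

open Filter Finset
open scoped ContDiff Topology

variable {d : ℕ}

local notation:max "𝔼" d:max => EuclideanSpace ℝ (Fin d)

section PartialDeriv

variable {U : Set 𝔼 d} {f g : 𝔼 d → ℝ} {ξ : 𝔼 d}

theorem pderiv'_congr_of_eventuallyEq (h : f =ᶠ[𝓝 ξ] g) (i : Fin d) :
    pderiv' d i f ξ = pderiv' d i g ξ := by
  simp only [pderiv', h.fderiv_eq]

theorem pderiv'_eqOn (hU : IsOpen U) (h : Set.EqOn f g U) (i : Fin d) :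
    Set.EqOn (pderiv' d i f) (pderiv' d i g) U := fun _ hξ =>
  pderiv'_congr_of_eventuallyEq (eventuallyEq_of_mem (hU.mem_nhds hξ) h) i

theorem ContDiffOn.pderiv' (hf : ContDiffOn ℝ ∞ f U) (hU : IsOpen U) (i : Fin d) :
    ContDiffOn ℝ ∞ (pderiv' d i f) U :=
  (hf.fderiv_of_isOpen hU (by simp)).clm_apply contDiffOn_const

theorem ContDiffOn.mderiv (hf : ContDiffOn ℝ ∞ f U) (hU : IsOpen U) (l : List (Fin d)) :
    ContDiffOn ℝ ∞ (mderiv d l f) U := by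
  induction l with
  | nil => exact hf
  | cons i l ih => exact ContDiffOn.pderiv' ih hU i

theorem pderiv'_mul (hf : DifferentiableAt ℝ f ξ) (hg : DifferentiableAt ℝ g ξ) (i : Fin d) :
    pderiv' d i (fun η => f η * g η) ξ = pderiv' d i f ξ * g ξ + f ξ * pderiv' d i g ξ := by
  simp only [pderiv', fderiv_fun_mul hf hg, add_apply, smul_apply, smul_eq_mul]
  ring

theorem pderiv'_sum {ι : Type*} (s : Finset ι) {f : ι → 𝔼 d → ℝ}
    (hf : ∀ j ∈ s, DifferentiableAt ℝ (f j) ξ) (i : Fin d) :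
    pderiv' d i (fun η => ∑ j ∈ s, f j η) ξ = ∑ j ∈ s, pderiv' d i (f j) ξ := by
  simp [pderiv', fderiv_fun_sum hf]

theorem pderiv'_inv (hf : DifferentiableAt ℝ f ξ) (hξ : f ξ ≠ 0) (i : Fin d) :
    pderiv' d i (fun η => (f η)⁻¹) ξ = -(f ξ ^ 2)⁻¹ * pderiv' d i f ξ := by
  have h := ((hasDerivAt_inv hξ).comp_hasFDerivAt ξ hf.hasFDerivAt).fderiv
  simp only [pderiv', Function.comp_def] at h ⊢
  simp [h]

theorem pderiv'_comm (hf : ContDiffOn ℝ ∞ f U) (hU : IsOpen U) (hξ : ξ ∈ U) (i j : Fin d) :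
    pderiv' d i (pderiv' d j f) ξ = pderiv' d j (pderiv' d i f) ξ := by
  have hf' : ContDiffAt ℝ ∞ f ξ := hf.contDiffAt (hU.mem_nhds hξ)
  have hdiff : DifferentiableAt ℝ (fderiv ℝ f) ξ :=
    (hf'.fderiv_right (m := ∞) (by simp)).differentiableAt (by simp)
  have hsnd : ∀ a b : Fin d, pderiv' d a (pderiv' d b f) ξ =
      fderiv ℝ (fderiv ℝ f) ξ (EuclideanSpace.single a 1) (EuclideanSpace.single b 1) := by
    intro a b
    change fderiv ℝ (fun η => fderiv ℝ f η (EuclideanSpace.single b 1)) ξ _ = _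
    simp [fderiv_clm_apply hdiff (differentiableAt_const _)]
  rw [hsnd, hsnd]
  exact hf'.isSymmSndFDerivAt (by simp; norm_cast) _ _

theorem mderiv_perm (hf : ContDiffOn ℝ ∞ f U) (hU : IsOpen U) {l₁ l₂ : List (Fin d)}
    (hl : l₁.Perm l₂) : Set.EqOn (mderiv d l₁ f) (mderiv d l₂ f) U := by
  induction hl with
  | nil => exact fun _ _ => rfl
  | cons i _ ih => exact pderiv'_eqOn hU ih i
  | swap i j l => exact fun ξ hξ => pderiv'_comm (hf.mderiv hU l) hU hξ j i
  | trans _ _ ih₁ ih₂ => exact ih₁.trans ih₂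

theorem norm_iteratedFDerivWithin_pderiv'_le (hf : ContDiffOn ℝ ∞ f U) (hU : IsOpen U)
    (hξ : ξ ∈ U) (i : Fin d) (k : ℕ) :
    ‖iteratedFDerivWithin ℝ k (pderiv' d i f) U ξ‖ ≤ ‖iteratedFDerivWithin ℝ (k + 1) f U ξ‖ := by
  have hEq : Set.EqOn (pderiv' d i f)
      (fun η => fderivWithin ℝ f U η (EuclideanSpace.single i 1)) U :=
    fun η hη => by simp only [pderiv', fderivWithin_of_isOpen hU hη]
  rw [iteratedFDerivWithin_congr hEq hξ,
    ← norm_iteratedFDerivWithin_fderivWithin hU.uniqueDiffOn hξ]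
  refine (norm_iteratedFDerivWithin_clm_apply_const
    ((hf.fderivWithin hU.uniqueDiffOn (m := ∞) (by simp)) ξ hξ) hU.uniqueDiffOn hξ
    (WithTop.coe_le_coe.2 le_top)).trans ?_
  simp

theorem norm_iteratedFDerivWithin_mderiv_le (hf : ContDiffOn ℝ ∞ f U) (hU : IsOpen U)
    (hξ : ξ ∈ U) (l : List (Fin d)) (k : ℕ) :
    ‖iteratedFDerivWithin ℝ k (mderiv d l f) U ξ‖ ≤
      ‖iteratedFDerivWithin ℝ (k + l.length) f U ξ‖ := by
  induction l generalizing k with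
  | nil => rfl
  | cons i l ih =>
    refine (norm_iteratedFDerivWithin_pderiv'_le (hf.mderiv hU l) hU hξ i k).trans ?_
    rw [List.length_cons, ← Nat.add_assoc, Nat.add_right_comm k]
    exact ih (k + 1)

theorem abs_mderiv_le_norm_iteratedFDerivWithin (hf : ContDiffOn ℝ ∞ f U) (hU : IsOpen U)
    (hξ : ξ ∈ U) (l : List (Fin d)) :
    |mderiv d l f ξ| ≤ ‖iteratedFDerivWithin ℝ l.length f U ξ‖ := by
  have h := norm_iteratedFDerivWithin_mderiv_le hf hU hξ l 0
  rwa [norm_iteratedFDerivWithin_zero, Real.norm_eq_abs, Nat.zero_add] at h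

theorem norm_iteratedFDerivWithin_succ_le_sum_pderiv' (hf : ContDiffOn ℝ ∞ f U)
    (hU : IsOpen U) (hξ : ξ ∈ U) (k : ℕ) :
    ‖iteratedFDerivWithin ℝ (k + 1) f U ξ‖ ≤
      ∑ i, ‖iteratedFDerivWithin ℝ k (pderiv' d i f) U ξ‖ := by
  have hEq : Set.EqOn (fderivWithin ℝ f U)
      (fun η => ∑ i, pderiv' d i f η • EuclideanSpace.proj (𝕜 := ℝ) i) U := by
    intro η hη
    ext v
    conv_lhs => rw [← (EuclideanSpace.basisFun (Fin d) ℝ).sum_repr v]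
    simp [pderiv', fderivWithin_of_isOpen hU hη, mul_comm]
  have hk : (k : ℕ∞ω) ≤ ∞ := WithTop.coe_le_coe.2 le_top
  rw [← norm_iteratedFDerivWithin_fderivWithin hU.uniqueDiffOn hξ,
    iteratedFDerivWithin_congr hEq hξ, iteratedFDerivWithin_fun_sum_apply hU.uniqueDiffOn hξ
      fun i _ => (((hf.pderiv' hU i).smul_const _) ξ hξ).of_le hk]
  refine (norm_sum_le _ _).trans (sum_le_sum fun i _ => ?_)
  rw [iteratedFDerivWithin_smul_const_apply (((hf.pderiv' hU i) ξ hξ).of_le hk)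
    hU.uniqueDiffOn hξ]
  refine (ContinuousLinearMap.norm_compContinuousMultilinearMap_le _ _).trans
    (mul_le_of_le_one_left (norm_nonneg _) ?_)
  rw [ContinuousLinearMap.norm_smulRight_apply]
  refine mul_le_one₀ ContinuousLinearMap.norm_id_le (norm_nonneg _) ?_
  exact ContinuousLinearMap.opNorm_le_bound _ zero_le_one fun x => by
    simpa using PiLp.norm_apply_le x i

end PartialDeriv

section InvPowSum

noncomputable def invPowSum (r : ℝ) (lo hi : ℕ) : ℝ := ∑ k ∈ Icc lo hi, (r ^ k)⁻¹

variable {r : ℝ} {lo hi : ℕ}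

theorem invPowSum_nonneg (hr : 0 ≤ r) (lo hi : ℕ) : 0 ≤ invPowSum r lo hi :=
  sum_nonneg fun _ _ => by positivity

theorem invPowSum_mono (hr : 0 ≤ r) {lo' hi' : ℕ} (hlo : lo' ≤ lo) (hhi : hi ≤ hi') :
    invPowSum r lo hi ≤ invPowSum r lo' hi' :=
  sum_le_sum_of_subset_of_nonneg (Icc_subset_Icc hlo hhi) fun _ _ _ => by positivity

theorem inv_pow_le_invPowSum (hr : 0 ≤ r) {k : ℕ} (hk : k ∈ Icc lo hi) :
    (r ^ k)⁻¹ ≤ invPowSum r lo hi :=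
  single_le_sum (f := fun k => (r ^ k)⁻¹) (fun _ _ => by positivity) hk

theorem one_le_invPowSum_zero (hr : 0 ≤ r) (hi : ℕ) : 1 ≤ invPowSum r 0 hi := by
  simpa using inv_pow_le_invPowSum hr (lo := 0) (hi := hi) (k := 0) (by simp)

theorem invPowSum_mul_le (hr : 0 ≤ r) (lo₁ hi₁ lo₂ hi₂ : ℕ) :
    invPowSum r lo₁ hi₁ * invPowSum r lo₂ hi₂ ≤
      ((hi₁ + hi₂ + 1 : ℕ) : ℝ) ^ 2 * invPowSum r (lo₁ + lo₂) (hi₁ + hi₂) := by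
  have hterm : ∀ k₁ ∈ Icc lo₁ hi₁, ∀ k₂ ∈ Icc lo₂ hi₂,
      (r ^ k₁)⁻¹ * (r ^ k₂)⁻¹ ≤ invPowSum r (lo₁ + lo₂) (hi₁ + hi₂) := by
    intro k₁ hk₁ k₂ hk₂
    rw [← mul_inv, ← pow_add]
    apply inv_pow_le_invPowSum hr
    simp only [mem_Icc] at hk₁ hk₂ ⊢
    omega
  have hcard : (Icc lo₁ hi₁).card * (Icc lo₂ hi₂).card ≤ (hi₁ + hi₂ + 1) ^ 2 := by
    rw [Nat.card_Icc, Nat.card_Icc, sq]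
    exact Nat.mul_le_mul (by omega) (by omega)
  calc invPowSum r lo₁ hi₁ * invPowSum r lo₂ hi₂
      ≤ ∑ _k₁ ∈ Icc lo₁ hi₁, ∑ _k₂ ∈ Icc lo₂ hi₂, invPowSum r (lo₁ + lo₂) (hi₁ + hi₂) := by
        rw [invPowSum, invPowSum, sum_mul_sum]
        exact sum_le_sum fun k₁ hk₁ => sum_le_sum fun k₂ hk₂ => hterm k₁ hk₁ k₂ hk₂
    _ = ((Icc lo₁ hi₁).card * (Icc lo₂ hi₂).card : ℕ) * invPowSum r (lo₁ + lo₂) (hi₁ + hi₂) := by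
        simp [mul_assoc]
    _ ≤ _ := by
        gcongr
        · exact invPowSum_nonneg hr _ _
        · exact_mod_cast hcard

end InvPowSum

section Phase

variable {Φ : 𝔼 d → ℝ} {V : Set (𝔼 d)}

structure IsAdmissiblePhase (Φ : 𝔼 d → ℝ) (V : Set (𝔼 d)) : Prop where
  contDiff : ContDiff ℝ ∞ Φ
  isOpen : IsOpen V
  bddAbove : ∀ k : ℕ, BddAbove ((fun ξ => ‖iteratedFDeriv ℝ k Φ ξ‖) '' V)

def nonstationarySet (Φ : 𝔼 d → ℝ) (V : Set (𝔼 d)) : Set (𝔼 d) :=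
  {ξ ∈ V | gradient Φ ξ ≠ 0}

theorem nonstationarySet_subset (Φ : 𝔼 d → ℝ) (V : Set (𝔼 d)) :
    nonstationarySet Φ V ⊆ {ξ | gradient Φ ξ ≠ 0} := fun _ h => h.2

theorem gradient_apply_eq_pderiv' (Φ : 𝔼 d → ℝ) (ξ : 𝔼 d) (j : Fin d) :
    gradient Φ ξ j = pderiv' d j Φ ξ := by
  have h := InnerProductSpace.toDual_symm_apply (𝕜 := ℝ) (x := EuclideanSpace.single j (1 : ℝ))
    (y := fderiv ℝ Φ ξ)
  rw [EuclideanSpace.inner_single_right] at h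
  simpa [gradient, pderiv'] using h

theorem abs_pderiv'_le_norm_gradient (Φ : 𝔼 d → ℝ) (ξ : 𝔼 d) (j : Fin d) :
    |pderiv' d j Φ ξ| ≤ ‖gradient Φ ξ‖ := by
  simpa [gradient_apply_eq_pderiv'] using PiLp.norm_apply_le (gradient Φ ξ) j

theorem norm_gradient_sq_eq_sum (Φ : 𝔼 d → ℝ) (ξ : 𝔼 d) :
    ‖gradient Φ ξ‖ ^ 2 = ∑ j, pderiv' d j Φ ξ * pderiv' d j Φ ξ := by
  rw [EuclideanSpace.norm_sq_eq]
  simp [gradient_apply_eq_pderiv', sq]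

theorem contDiff_gradient (hΦ : ContDiff ℝ ∞ Φ) : ContDiff ℝ ∞ (gradient Φ) :=
  (InnerProductSpace.toDual ℝ (𝔼 d)).symm.contDiff.comp (hΦ.fderiv_right (m := ∞) (by simp))

theorem IsAdmissiblePhase.isOpen_nonstationarySet (hΦ : IsAdmissiblePhase Φ V) :
    IsOpen (nonstationarySet Φ V) :=
  hΦ.isOpen.inter (isOpen_ne_fun (contDiff_gradient hΦ.contDiff).continuous continuous_const)

theorem phaseSemi_mono {k k' : ℕ} (h : k ≤ k') (V : Set (𝔼 d)) (Φ : 𝔼 d → ℝ) :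
    phaseSemi d k V Φ ≤ phaseSemi d k' V Φ :=
  sum_le_sum_of_subset_of_nonneg (Icc_subset_Icc le_rfl h) fun _ _ _ => Real.sSup_nonneg <| by
    rintro _ ⟨_, _, rfl⟩
    exact norm_nonneg _

theorem IsAdmissiblePhase.norm_iteratedFDeriv_le_phaseSemi (hΦ : IsAdmissiblePhase Φ V)
    {m k : ℕ} (h2 : 2 ≤ m) (hmk : m ≤ k) {ξ : 𝔼 d} (hξ : ξ ∈ V) :
    ‖iteratedFDeriv ℝ m Φ ξ‖ ≤ phaseSemi d k V Φ := by
  refine (le_csSup (hΦ.bddAbove m) ⟨ξ, hξ, rfl⟩).trans ?_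
  refine single_le_sum (f := fun n => sSup ((fun ξ => ‖iteratedFDeriv ℝ n Φ ξ‖) '' V))
    (fun n _ => Real.sSup_nonneg ?_) (mem_Icc.2 ⟨h2, hmk⟩)
  rintro _ ⟨_, _, rfl⟩
  exact norm_nonneg _

end Phase

theorem norm_iteratedFDerivWithin_mul_le_of_le_invPowSum {U : Set (𝔼 d)} (hU : IsOpen U)
    {f g : 𝔼 d → ℝ} (hf : ContDiffOn ℝ ∞ f U) (hg : ContDiffOn ℝ ∞ g U) {ξ : 𝔼 d} (hξ : ξ ∈ U)
    {r : ℝ} (hr : 0 ≤ r) {k lo₁ hi₁ lo₂ hi₂ : ℕ} {a b : ℕ → ℝ}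
    (ha : ∀ i ≤ k, ‖iteratedFDerivWithin ℝ i f U ξ‖ ≤ a i * invPowSum r lo₁ (hi₁ + i))
    (hb : ∀ i ≤ k, ‖iteratedFDerivWithin ℝ i g U ξ‖ ≤ b i * invPowSum r lo₂ (hi₂ + i))
    (ha₀ : ∀ i ≤ k, 0 ≤ a i) (hb₀ : ∀ i ≤ k, 0 ≤ b i) :
    ‖iteratedFDerivWithin ℝ k (fun η => f η * g η) U ξ‖ ≤
      (∑ i ∈ range (k + 1), ((hi₁ + hi₂ + k + 1 : ℕ) : ℝ) ^ 2 * k.choose i * (a i * b (k - i))) *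
        invPowSum r (lo₁ + lo₂) (hi₁ + hi₂ + k) := by
  set C : ℝ := ((hi₁ + hi₂ + k + 1 : ℕ) : ℝ) ^ 2
  set S := invPowSum r (lo₁ + lo₂) (hi₁ + hi₂ + k)
  refine (norm_iteratedFDerivWithin_mul_le hf hg hU.uniqueDiffOn hξ
    (WithTop.coe_le_coe.2 le_top)).trans ?_
  rw [sum_mul]
  refine sum_le_sum fun i hi => ?_
  have hik : i ≤ k := Nat.lt_succ_iff.1 (mem_range.1 hi)
  have hS : invPowSum r lo₁ (hi₁ + i) * invPowSum r lo₂ (hi₂ + (k - i)) ≤ C * S := by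
    have h := invPowSum_mul_le hr lo₁ (hi₁ + i) lo₂ (hi₂ + (k - i))
    rwa [show hi₁ + i + (hi₂ + (k - i)) = hi₁ + hi₂ + k by omega] at h
  have ha₀' := ha₀ i hik
  have hb₀' := hb₀ (k - i) (Nat.sub_le k i)
  calc (k.choose i : ℝ) * ‖iteratedFDerivWithin ℝ i f U ξ‖ *
        ‖iteratedFDerivWithin ℝ (k - i) g U ξ‖
      ≤ k.choose i * (a i * invPowSum r lo₁ (hi₁ + i)) *
          (b (k - i) * invPowSum r lo₂ (hi₂ + (k - i))) := by
        gcongr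
        · exact mul_nonneg (Nat.cast_nonneg _) (mul_nonneg ha₀' (invPowSum_nonneg hr _ _))
        · exact ha i hik
        · exact hb (k - i) (Nat.sub_le k i)
    _ = k.choose i * (a i * b (k - i)) *
          (invPowSum r lo₁ (hi₁ + i) * invPowSum r lo₂ (hi₂ + (k - i))) := by ring
    _ ≤ k.choose i * (a i * b (k - i)) * (C * S) := by gcongr
    _ = C * k.choose i * (a i * b (k - i)) * S := by ring

section DerivBound

/-- The bounding function `F` comes before the phase, which is why the functions to be estimated
are families `Φ ↦ c Φ`. -/
structure DerivBoundUpTo (n lo hi m : ℕ) (c : (𝔼 d → ℝ) → 𝔼 d → ℝ) : Prop where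
  contDiffOn : ∀ Φ V, IsAdmissiblePhase Φ V → ContDiffOn ℝ ∞ (c Φ) (nonstationarySet Φ V)
  bound : ∀ k ≤ n, ∃ F : ℝ → ℝ, Monotone F ∧ 0 ≤ F ∧ ∀ Φ V, IsAdmissiblePhase Φ V →
    ∀ ξ ∈ nonstationarySet Φ V,
      ‖iteratedFDerivWithin ℝ k (c Φ) (nonstationarySet Φ V) ξ‖ ≤
        F (phaseSemi d (m + k) V Φ) * invPowSum ‖gradient Φ ξ‖ lo (hi + k)

namespace DerivBoundUpTo

variable {n lo hi m : ℕ} {c c' : (𝔼 d → ℝ) → 𝔼 d → ℝ}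

theorem mono {n' lo' hi' m' : ℕ} (h : DerivBoundUpTo n lo hi m c) (hn : n' ≤ n)
    (hlo : lo' ≤ lo) (hhi : hi ≤ hi') (hm : m ≤ m') : DerivBoundUpTo n' lo' hi' m' c := by
  refine ⟨h.contDiffOn, fun k hk => ?_⟩
  obtain ⟨F, hFm, hF0, hF⟩ := h.bound k (hk.trans hn)
  refine ⟨F, hFm, hF0, fun Φ V hΦ ξ hξ => (hF Φ V hΦ ξ hξ).trans ?_⟩
  exact mul_le_mul (hFm (phaseSemi_mono (by omega) V Φ))
    (invPowSum_mono (norm_nonneg _) hlo (by omega)) (invPowSum_nonneg (norm_nonneg _) _ _)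
    (hF0 _)

theorem congr (h : DerivBoundUpTo n lo hi m c')
    (hc : ∀ Φ V, IsAdmissiblePhase Φ V → Set.EqOn (c Φ) (c' Φ) (nonstationarySet Φ V)) :
    DerivBoundUpTo n lo hi m c := by
  refine ⟨fun Φ V hΦ => (h.contDiffOn Φ V hΦ).congr (hc Φ V hΦ), fun k hk => ?_⟩
  obtain ⟨F, hFm, hF0, hF⟩ := h.bound k hk
  refine ⟨F, hFm, hF0, fun Φ V hΦ ξ hξ => ?_⟩
  rw [iteratedFDerivWithin_congr (hc Φ V hΦ) hξ]
  exact hF Φ V hΦ ξ hξ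

theorem of_abs_le
    (hc : ∀ Φ V, IsAdmissiblePhase Φ V → ContDiffOn ℝ ∞ (c Φ) (nonstationarySet Φ V))
    (h : ∀ Φ V, IsAdmissiblePhase Φ V → ∀ ξ ∈ nonstationarySet Φ V,
      |c Φ ξ| ≤ invPowSum ‖gradient Φ ξ‖ lo hi) :
    DerivBoundUpTo 0 lo hi m c := by
  refine ⟨hc, fun k hk => ⟨fun _ => 1, monotone_const, fun _ => zero_le_one, ?_⟩⟩
  obtain rfl : k = 0 := Nat.le_zero.1 hk
  simpa using h

theorem zero : DerivBoundUpTo (d := d) n lo hi m fun _ _ => 0 := by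
  refine ⟨fun _ _ _ => contDiffOn_const, fun k _ => ⟨0, monotone_const, le_rfl, ?_⟩⟩
  intro Φ V _ ξ _
  simp [iteratedFDerivWithin_fun_zero]

theorem const (a : ℝ) : DerivBoundUpTo (d := d) n 0 0 0 fun _ _ => a := by
  refine ⟨fun _ _ _ => contDiffOn_const, fun k _ => ⟨fun _ => |a|, monotone_const,
    fun _ => abs_nonneg a, fun Φ V _ ξ _ => ?_⟩⟩
  rcases Nat.eq_zero_or_pos k with rfl | hk
  · simpa using le_mul_of_one_le_right (abs_nonneg a) (one_le_invPowSum_zero (norm_nonneg _) 0)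
  · rw [iteratedFDerivWithin_const_of_ne hk.ne', Pi.zero_apply, norm_zero]
    exact mul_nonneg (abs_nonneg a) (invPowSum_nonneg (norm_nonneg _) _ _)

theorem add {c₁ c₂ : (𝔼 d → ℝ) → 𝔼 d → ℝ} (h₁ : DerivBoundUpTo n lo hi m c₁)
    (h₂ : DerivBoundUpTo n lo hi m c₂) :
    DerivBoundUpTo n lo hi m fun Φ ξ => c₁ Φ ξ + c₂ Φ ξ := by
  refine ⟨fun Φ V hΦ => (h₁.contDiffOn Φ V hΦ).add (h₂.contDiffOn Φ V hΦ), fun k hk => ?_⟩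
  obtain ⟨F₁, hm₁, hp₁, hF₁⟩ := h₁.bound k hk
  obtain ⟨F₂, hm₂, hp₂, hF₂⟩ := h₂.bound k hk
  refine ⟨F₁ + F₂, hm₁.add hm₂, add_nonneg hp₁ hp₂, fun Φ V hΦ ξ hξ => ?_⟩
  rw [fun_iteratedFDerivWithin_add_apply
    (((h₁.contDiffOn Φ V hΦ) ξ hξ).of_le (WithTop.coe_le_coe.2 le_top))
    (((h₂.contDiffOn Φ V hΦ) ξ hξ).of_le (WithTop.coe_le_coe.2 le_top))
    hΦ.isOpen_nonstationarySet.uniqueDiffOn hξ, Pi.add_apply, add_mul]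
  exact (norm_add_le _ _).trans (add_le_add (hF₁ Φ V hΦ ξ hξ) (hF₂ Φ V hΦ ξ hξ))

theorem sum {ι : Type*} (s : Finset ι) {c : ι → (𝔼 d → ℝ) → 𝔼 d → ℝ}
    (h : ∀ j ∈ s, DerivBoundUpTo n lo hi m (c j)) :
    DerivBoundUpTo n lo hi m fun Φ ξ => ∑ j ∈ s, c j Φ ξ := by
  induction s using Finset.cons_induction with
  | empty => simpa using zero
  | cons a s ha ih =>
    simp only [Finset.sum_cons]
    exact (h a (mem_cons_self a s)).add (ih fun j hj => h j (mem_cons_of_mem hj))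

theorem mul {lo₁ hi₁ m₁ lo₂ hi₂ m₂ : ℕ} {c₁ c₂ : (𝔼 d → ℝ) → 𝔼 d → ℝ}
    (h₁ : DerivBoundUpTo n lo₁ hi₁ m₁ c₁) (h₂ : DerivBoundUpTo n lo₂ hi₂ m₂ c₂) :
    DerivBoundUpTo n (lo₁ + lo₂) (hi₁ + hi₂) (max m₁ m₂) fun Φ ξ => c₁ Φ ξ * c₂ Φ ξ := by
  refine ⟨fun Φ V hΦ => (h₁.contDiffOn Φ V hΦ).mul (h₂.contDiffOn Φ V hΦ), fun k hk => ?_⟩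
  choose! F₁ hm₁ hp₁ hF₁ using h₁.bound
  choose! F₂ hm₂ hp₂ hF₂ using h₂.bound
  have hp₁' : ∀ i ∈ range (k + 1), ∀ x, 0 ≤ F₁ i x := fun i hi x =>
    hp₁ i (by have := mem_range.1 hi; omega) x
  have hp₂' : ∀ i ∈ range (k + 1), ∀ x, 0 ≤ F₂ (k - i) x := fun i _ x => hp₂ _ (by omega) x
  refine ⟨fun x => ∑ i ∈ range (k + 1),
      ((hi₁ + hi₂ + k + 1 : ℕ) : ℝ) ^ 2 * k.choose i * (F₁ i x * F₂ (k - i) x),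
    fun x y hxy => sum_le_sum fun i hi => ?_,
    fun x => sum_nonneg fun i hi => by have := hp₁' i hi x; have := hp₂' i hi x; positivity,
    fun Φ V hΦ ξ hξ => ?_⟩
  · have hik : i ≤ k := Nat.lt_succ_iff.1 (mem_range.1 hi)
    exact mul_le_mul_of_nonneg_left (mul_le_mul (hm₁ i (by omega) hxy) (hm₂ _ (by omega) hxy)
      (hp₂' i hi x) (hp₁' i hi y)) (by positivity)
  set X := phaseSemi d (max m₁ m₂ + k) V Φ
  have hr : 0 ≤ ‖gradient Φ ξ‖ := norm_nonneg _
  refine norm_iteratedFDerivWithin_mul_le_of_le_invPowSum hΦ.isOpen_nonstationarySet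
    (h₁.contDiffOn Φ V hΦ) (h₂.contDiffOn Φ V hΦ) hξ hr (fun i hi => ?_) (fun i hi => ?_)
    (fun i hi => hp₁ i (by omega) X) (fun i hi => hp₂ i (by omega) X)
  · exact (hF₁ i (by omega) Φ V hΦ ξ hξ).trans <| mul_le_mul_of_nonneg_right
      (hm₁ i (by omega) (phaseSemi_mono (by omega) V Φ)) (invPowSum_nonneg hr _ _)
  · exact (hF₂ i (by omega) Φ V hΦ ξ hξ).trans <| mul_le_mul_of_nonneg_right
      (hm₂ i (by omega) (phaseSemi_mono (by omega) V Φ)) (invPowSum_nonneg hr _ _)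

theorem pderiv' (h : DerivBoundUpTo (n + 1) lo hi m c) (i : Fin d) :
    DerivBoundUpTo n lo (hi + 1) (m + 1) fun Φ => pderiv' d i (c Φ) := by
  refine ⟨fun Φ V hΦ => (h.contDiffOn Φ V hΦ).pderiv' hΦ.isOpen_nonstationarySet i,
    fun k hk => ?_⟩
  obtain ⟨F, hFm, hF0, hF⟩ := h.bound (k + 1) (by omega)
  refine ⟨F, hFm, hF0, fun Φ V hΦ ξ hξ => ?_⟩
  refine (norm_iteratedFDerivWithin_pderiv'_le (h.contDiffOn Φ V hΦ)
    hΦ.isOpen_nonstationarySet hξ i k).trans ?_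
  rw [show m + 1 + k = m + (k + 1) by omega, show hi + 1 + k = hi + (k + 1) by omega]
  exact hF Φ V hΦ ξ hξ

theorem succ_of_pderiv' (h₀ : DerivBoundUpTo 0 lo hi m c)
    (h : ∀ i, DerivBoundUpTo n lo (hi + 1) (m + 1) fun Φ => _root_.pderiv' d i (c Φ)) :
    DerivBoundUpTo (n + 1) lo hi m c := by
  refine ⟨h₀.contDiffOn, fun k hk => ?_⟩
  rcases k with _ | k
  · exact h₀.bound 0 le_rfl
  choose F hFm hF0 hF using fun i => (h i).bound k (by omega)
  refine ⟨∑ i, F i, fun x y hxy => by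
    simpa only [Finset.sum_apply] using sum_le_sum fun i _ => hFm i hxy,
    sum_nonneg fun i _ => hF0 i, fun Φ V hΦ ξ hξ => ?_⟩
  refine (norm_iteratedFDerivWithin_succ_le_sum_pderiv' (h₀.contDiffOn Φ V hΦ)
    hΦ.isOpen_nonstationarySet hξ k).trans ?_
  rw [Finset.sum_apply, sum_mul]
  refine sum_le_sum fun i _ => ?_
  rw [show m + (k + 1) = m + 1 + k by omega, show hi + (k + 1) = hi + 1 + k by omega]
  exact hF i Φ V hΦ ξ hξ

end DerivBoundUpTo

theorem derivBoundUpTo_mderiv {l : List (Fin d)} (hl : 2 ≤ l.length) (n : ℕ) :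
    DerivBoundUpTo n 0 0 l.length fun Φ => mderiv d l Φ := by
  refine ⟨fun Φ V hΦ => hΦ.contDiff.contDiffOn.mderiv hΦ.isOpen_nonstationarySet l,
    fun k _ => ⟨fun x => max x 0, fun x y hxy => max_le_max hxy le_rfl, fun x => le_max_right x 0,
      fun Φ V hΦ ξ hξ => ?_⟩⟩
  have hU := hΦ.isOpen_nonstationarySet
  calc ‖iteratedFDerivWithin ℝ k (mderiv d l Φ) (nonstationarySet Φ V) ξ‖
      ≤ ‖iteratedFDerivWithin ℝ (k + l.length) Φ (nonstationarySet Φ V) ξ‖ :=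
        norm_iteratedFDerivWithin_mderiv_le hΦ.contDiff.contDiffOn hU hξ l k
    _ = ‖iteratedFDeriv ℝ (k + l.length) Φ ξ‖ := by rw [iteratedFDerivWithin_of_isOpen _ hU hξ]
    _ ≤ phaseSemi d (l.length + k) V Φ :=
        hΦ.norm_iteratedFDeriv_le_phaseSemi (by omega) (by omega) hξ.1
    _ ≤ max (phaseSemi d (l.length + k) V Φ) 0 * invPowSum ‖gradient Φ ξ‖ 0 (0 + k) :=
        (le_max_left _ _).trans <|
          le_mul_of_one_le_right (le_max_right _ _) (one_le_invPowSum_zero (norm_nonneg _) _)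

end DerivBound

section GradientCoefficients

variable {Φ : 𝔼 d → ℝ} {ξ : 𝔼 d}

noncomputable def invNormSqGrad (Φ : 𝔼 d → ℝ) (ξ : 𝔼 d) : ℝ := (‖gradient Φ ξ‖ ^ 2)⁻¹

noncomputable def gradDivNormSq (i : Fin d) (Φ : 𝔼 d → ℝ) (ξ : 𝔼 d) : ℝ :=
  fderiv ℝ Φ ξ (EuclideanSpace.single i 1) / ‖gradient Φ ξ‖ ^ 2

theorem gradDivNormSq_eq_mul (i : Fin d) (Φ : 𝔼 d → ℝ) :
    gradDivNormSq i Φ = fun ξ => pderiv' d i Φ ξ * invNormSqGrad Φ ξ :=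
  funext fun _ => div_eq_mul_inv _ _

theorem abs_invNormSqGrad (Φ : 𝔼 d → ℝ) (ξ : 𝔼 d) :
    |invNormSqGrad Φ ξ| = invPowSum ‖gradient Φ ξ‖ 2 2 := by
  simp [invNormSqGrad, invPowSum]

theorem abs_gradDivNormSq_le (i : Fin d) (Φ : 𝔼 d → ℝ) (ξ : 𝔼 d) :
    |gradDivNormSq i Φ ξ| ≤ invPowSum ‖gradient Φ ξ‖ 1 1 := by
  have h := abs_pderiv'_le_norm_gradient Φ ξ i
  rw [gradDivNormSq, abs_div, abs_pow, abs_norm]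
  calc |pderiv' d i Φ ξ| / ‖gradient Φ ξ‖ ^ 2 ≤ ‖gradient Φ ξ‖ / ‖gradient Φ ξ‖ ^ 2 := by gcongr
    _ = invPowSum ‖gradient Φ ξ‖ 1 1 := by simp [invPowSum, sq, div_self_mul_self']

theorem contDiffOn_invNormSqGrad (hΦ : ContDiff ℝ ∞ Φ) :
    ContDiffOn ℝ ∞ (invNormSqGrad Φ) {ξ | gradient Φ ξ ≠ 0} :=
  ((contDiff_gradient hΦ).norm_sq ℝ).contDiffOn.inv fun _ hξ =>
    pow_ne_zero 2 (norm_ne_zero_iff.2 hξ)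

theorem contDiffOn_gradDivNormSq (hΦ : ContDiff ℝ ∞ Φ) (i : Fin d) :
    ContDiffOn ℝ ∞ (gradDivNormSq i Φ) {ξ | gradient Φ ξ ≠ 0} := by
  rw [gradDivNormSq_eq_mul]
  exact (hΦ.contDiffOn.pderiv' isOpen_univ i).mono (Set.subset_univ _) |>.mul
    (contDiffOn_invNormSqGrad hΦ)

theorem pderiv'_normSq_gradient (hΦ : ContDiff ℝ ∞ Φ) (i : Fin d) (ξ : 𝔼 d) :
    pderiv' d i (fun η => ‖gradient Φ η‖ ^ 2) ξ =
      ∑ j, 2 * (pderiv' d j Φ ξ * mderiv d [i, j] Φ ξ) := by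
  have hdiff : ∀ j, DifferentiableAt ℝ (pderiv' d j Φ) ξ := fun j =>
    ((hΦ.contDiffOn.pderiv' isOpen_univ j).contDiffAt univ_mem).differentiableAt (by simp)
  simp_rw [norm_gradient_sq_eq_sum]
  rw [pderiv'_sum univ (f := fun j η => pderiv' d j Φ η * pderiv' d j Φ η)
    fun j _ => (hdiff j).mul (hdiff j)]
  refine sum_congr rfl fun j _ => ?_
  rw [pderiv'_mul (hdiff j) (hdiff j)]
  simp only [mderiv]
  ring

theorem pderiv'_invNormSqGrad (hΦ : ContDiff ℝ ∞ Φ) (hξ : gradient Φ ξ ≠ 0) (i : Fin d) :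
    pderiv' d i (invNormSqGrad Φ) ξ =
      ∑ j, -2 * (gradDivNormSq j Φ ξ * (invNormSqGrad Φ ξ * mderiv d [i, j] Φ ξ)) := by
  have hdiff : DifferentiableAt ℝ (fun η => ‖gradient Φ η‖ ^ 2) ξ :=
    ((contDiff_gradient hΦ).norm_sq ℝ).differentiable (by simp) ξ
  change pderiv' d i (fun η => (‖gradient Φ η‖ ^ 2)⁻¹) ξ = _
  rw [pderiv'_inv hdiff (pow_ne_zero 2 (norm_ne_zero_iff.2 hξ)),
    pderiv'_normSq_gradient hΦ, mul_sum]
  refine sum_congr rfl fun j _ => ?_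
  simp only [gradDivNormSq_eq_mul, invNormSqGrad]
  ring

theorem pderiv'_gradDivNormSq (hΦ : ContDiff ℝ ∞ Φ) (hξ : gradient Φ ξ ≠ 0) (i j : Fin d) :
    pderiv' d i (gradDivNormSq j Φ) ξ = mderiv d [i, j] Φ ξ * invNormSqGrad Φ ξ +
      ∑ k, -2 * (gradDivNormSq j Φ ξ * (gradDivNormSq k Φ ξ * mderiv d [i, k] Φ ξ)) := by
  have hU : IsOpen {ξ | gradient Φ ξ ≠ 0} :=
    isOpen_ne_fun (contDiff_gradient hΦ).continuous continuous_const
  rw [gradDivNormSq_eq_mul j, pderiv'_mul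
    (((hΦ.contDiffOn.pderiv' isOpen_univ j).contDiffAt univ_mem).differentiableAt (by simp))
    (((contDiffOn_invNormSqGrad hΦ).contDiffAt (hU.mem_nhds hξ)).differentiableAt (by simp)),
    pderiv'_invNormSqGrad hΦ hξ, mul_sum]
  congr 1
  refine sum_congr rfl fun k _ => ?_
  simp only [gradDivNormSq_eq_mul]
  ring

theorem derivBoundUpTo_invNormSqGrad_gradDivNormSq (n : ℕ) :
    DerivBoundUpTo n 2 2 1 (invNormSqGrad (d := d)) ∧
      ∀ j : Fin d, DerivBoundUpTo n 1 1 1 (gradDivNormSq j) := by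
  induction n with
  | zero =>
    exact ⟨.of_abs_le (fun Φ V hΦ => (contDiffOn_invNormSqGrad hΦ.contDiff).mono
        (nonstationarySet_subset Φ V)) fun Φ _ _ ξ _ => (abs_invNormSqGrad Φ ξ).le,
      fun j => .of_abs_le (fun Φ V hΦ => (contDiffOn_gradDivNormSq hΦ.contDiff j).mono
        (nonstationarySet_subset Φ V)) fun Φ _ _ ξ _ => abs_gradDivNormSq_le j Φ ξ⟩
  | succ n ih =>
    obtain ⟨hG, hA⟩ := ih
    have hΦ₂ : ∀ i j : Fin d, DerivBoundUpTo n 0 0 2 fun Φ => mderiv d [i, j] Φ :=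
      fun i j => derivBoundUpTo_mderiv (l := [i, j]) le_rfl n
    refine ⟨(hG.mono (Nat.zero_le n) le_rfl le_rfl le_rfl).succ_of_pderiv' fun i => ?_,
      fun j => ((hA j).mono (Nat.zero_le n) le_rfl le_rfl le_rfl).succ_of_pderiv' fun i => ?_⟩
    · refine (DerivBoundUpTo.mono (DerivBoundUpTo.sum univ fun j _ =>
        (DerivBoundUpTo.const (-2)).mul ((hA j).mul (hG.mul (hΦ₂ i j))))
          le_rfl (by norm_num) (by norm_num) (by norm_num)).congr ?_
      exact fun Φ V hΦ ξ hξ => pderiv'_invNormSqGrad hΦ.contDiff hξ.2 i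
    · refine (DerivBoundUpTo.add
        (((hΦ₂ i j).mul hG).mono le_rfl (by norm_num) (by norm_num) (by norm_num))
        (DerivBoundUpTo.mono (DerivBoundUpTo.sum univ fun k _ =>
          (DerivBoundUpTo.const (-2)).mul ((hA j).mul ((hA k).mul (hΦ₂ i k))))
            le_rfl (by norm_num) (by norm_num) (by norm_num))).congr ?_
      exact fun Φ V hΦ ξ hξ => pderiv'_gradDivNormSq hΦ.contDiff hξ.2 i j

end GradientCoefficients

section MultiIndex

variable {N : ℕ}

def mIdxDegree (α : Fin d → Fin (N + 1)) : ℕ := ∑ i, (α i : ℕ)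

/-- Saturates at `N`: this is `α + e_i` only when `α i < N`. -/
def incIdx (α : Fin d → Fin (N + 1)) (i : Fin d) : Fin d → Fin (N + 1) :=
  Function.update α i ⟨min ((α i : ℕ) + 1) N, by omega⟩

theorem le_mIdxDegree (α : Fin d → Fin (N + 1)) (i : Fin d) : (α i : ℕ) ≤ mIdxDegree α :=
  single_le_sum (f := fun j => (α j : ℕ)) (fun _ _ => Nat.zero_le _) (mem_univ i)

theorem mIdxDegree_incIdx_le (α : Fin d → Fin (N + 1)) (i : Fin d) :
    mIdxDegree (incIdx α i) ≤ mIdxDegree α + 1 := by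
  calc mIdxDegree (incIdx α i) ≤ ∑ j, ((α j : ℕ) + if j = i then 1 else 0) := by
        refine sum_le_sum fun j _ => ?_
        rcases eq_or_ne j i with rfl | hj
        · simp [incIdx]
        · simp [incIdx, hj]
    _ = mIdxDegree α + 1 := by simp [sum_add_distrib, mIdxDegree]

theorem count_mIdxList (α : Fin d → Fin (N + 1)) (j : Fin d) :
    (mIdxList d N α).count j = α j := by
  simp [mIdxList, List.count_flatMap, List.count_replicate, Function.comp_def,
    ← Fin.sum_univ_def]

theorem mIdxList_zero : mIdxList d N 0 = [] := by
  simp [mIdxList]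

theorem perm_cons_mIdxList {α : Fin d → Fin (N + 1)} {i : Fin d} (h : (α i : ℕ) < N) :
    (i :: mIdxList d N α).Perm (mIdxList d N (incIdx α i)) := by
  refine List.perm_iff_count.2 fun j => ?_
  rcases eq_or_ne j i with rfl | hj
  · rw [List.count_cons_self, count_mIdxList, count_mIdxList, incIdx, Function.update_self]
    exact (min_eq_left h).symm
  · simp [count_mIdxList, incIdx, hj, Ne.symm hj]

theorem pderiv'_mderivIdx {U : Set (𝔼 d)} {f : 𝔼 d → ℝ} {ξ : 𝔼 d} (hf : ContDiffOn ℝ ∞ f U)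
    (hU : IsOpen U) (hξ : ξ ∈ U) {α : Fin d → Fin (N + 1)} {i : Fin d} (h : (α i : ℕ) < N) :
    pderiv' d i (mderivIdx d N α f) ξ = mderivIdx d N (incIdx α i) f ξ :=
  mderiv_perm hf hU (perm_cons_mIdxList h) hξ

theorem sum_mul_pderiv'_mderivIdx {U : Set (𝔼 d)} {f : 𝔼 d → ℝ} {ξ : 𝔼 d}
    (hf : ContDiffOn ℝ ∞ f U) (hU : IsOpen U) (hξ : ξ ∈ U) (i : Fin d)
    (g : (Fin d → Fin (N + 1)) → ℝ) (hg : ∀ β, g β ≠ 0 → mIdxDegree β < N) :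
    ∑ β, g β * pderiv' d i (mderivIdx d N β f) ξ =
      ∑ α, (∑ β with incIdx β i = α, g β) * mderivIdx d N α f ξ := by
  calc ∑ β, g β * pderiv' d i (mderivIdx d N β f) ξ
      = ∑ β, g β * mderivIdx d N (incIdx β i) f ξ := by
        refine sum_congr rfl fun β _ => ?_
        rcases eq_or_ne (g β) 0 with h | h
        · simp [h]
        · rw [pderiv'_mderivIdx hf hU hξ ((le_mIdxDegree β i).trans_lt (hg β h))]
    _ = ∑ α, ∑ β with incIdx β i = α, g β * mderivIdx d N (incIdx β i) f ξ :=
        (sum_fiberwise _ _ _).symm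
    _ = _ := sum_congr rfl fun α _ => by
        rw [sum_mul]
        exact sum_congr rfl fun β hβ => by rw [(mem_filter.1 hβ).2]

end MultiIndex

section Expansion

variable {N : ℕ}

/-- The second sum collects the terms `A_i c_β ∂_i ∂^β f` with `∂_i ∂^β = ∂^α`. -/
noncomputable def expansionCoeff (N : ℕ) :
    ℕ → (Fin d → Fin (N + 1)) → (𝔼 d → ℝ) → 𝔼 d → ℝ
  | 0, α, _ => fun _ => if α = 0 then 1 else 0
  | n + 1, α, Φ => fun ξ => ∑ i,
      (pderiv' d i (fun η => gradDivNormSq i Φ η * expansionCoeff N n α Φ η) ξ +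
        ∑ β with incIdx β i = α, gradDivNormSq i Φ ξ * expansionCoeff N n β Φ ξ)

theorem expansionCoeff_eq_zero {n : ℕ} {α : Fin d → Fin (N + 1)} (h : n < mIdxDegree α)
    (Φ : 𝔼 d → ℝ) : expansionCoeff N n α Φ = 0 := by
  induction n generalizing α with
  | zero =>
    have hα : α ≠ 0 := by rintro rfl; simp [mIdxDegree] at h
    funext ξ
    simp [expansionCoeff, hα]
  | succ n ih =>
    funext ξ
    have hfiber : ∀ i, ∀ β ∈ univ.filter (incIdx · i = α), expansionCoeff N n β Φ = 0 :=
      fun i β hβ => ih (by have := (mem_filter.1 hβ).2 ▸ mIdxDegree_incIdx_le β i; omega)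
    simp only [expansionCoeff, ih (Nat.lt_of_succ_lt h), Pi.zero_apply, mul_zero]
    refine sum_eq_zero fun i _ => ?_
    rw [sum_eq_zero fun β hβ => by rw [hfiber i β hβ, Pi.zero_apply, mul_zero]]
    simp [pderiv']

theorem derivBoundUpTo_expansionCoeff (N n : ℕ) (α : Fin d → Fin (N + 1)) (k : ℕ) :
    DerivBoundUpTo k n (2 * n - mIdxDegree α) (n - mIdxDegree α + 1) (expansionCoeff N n α) := by
  induction n generalizing α k with
  | zero => exact (DerivBoundUpTo.const _).mono le_rfl le_rfl (Nat.zero_le _) (Nat.zero_le _)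
  | succ n ih =>
    by_cases hα : n + 1 < mIdxDegree α
    · exact DerivBoundUpTo.zero.congr fun Φ _ _ =>
        by rw [expansionCoeff_eq_zero hα]; exact Set.eqOn_refl _ _
    have hA := (derivBoundUpTo_invNormSqGrad_gradDivNormSq (d := d) (k + 1)).2
    have hderiv : ∀ i, DerivBoundUpTo k (n + 1) (2 * (n + 1) - mIdxDegree α)
        (n + 1 - mIdxDegree α + 1)
        fun Φ => pderiv' d i fun η => gradDivNormSq i Φ η * expansionCoeff N n α Φ η := by
      intro i
      by_cases hαn : n < mIdxDegree α
      · refine DerivBoundUpTo.zero.congr fun Φ V _ ξ _ => ?_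
        simp [expansionCoeff_eq_zero hαn, pderiv']
      · exact (((hA i).mul (ih α (k + 1))).pderiv' i).mono le_rfl (by omega) (by omega) (by omega)
    have hfiber : ∀ i, ∀ β ∈ univ.filter (incIdx · i = α), DerivBoundUpTo k (n + 1)
        (2 * (n + 1) - mIdxDegree α) (n + 1 - mIdxDegree α + 1)
        fun Φ ξ => gradDivNormSq i Φ ξ * expansionCoeff N n β Φ ξ := by
      intro i β hβ
      have := (mem_filter.1 hβ).2 ▸ mIdxDegree_incIdx_le β i
      exact ((hA i).mono (by omega) le_rfl le_rfl le_rfl |>.mul (ih β k)).mono le_rfl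
        (by omega) (by omega) (by omega)
    exact DerivBoundUpTo.sum univ fun i _ => (hderiv i).add (DerivBoundUpTo.sum _ (hfiber i))

theorem iterate_transpOp_eqOn {Φ : 𝔼 d → ℝ} {V : Set (𝔼 d)} (hΦ : IsAdmissiblePhase Φ V)
    {f : 𝔼 d → ℝ} (hf : ContDiffOn ℝ ∞ f (nonstationarySet Φ V)) {n : ℕ} (hn : n ≤ N) :
    Set.EqOn ((transpOp d Φ)^[n] f)
      (fun ξ => ∑ α, expansionCoeff N n α Φ ξ * mderivIdx d N α f ξ) (nonstationarySet Φ V) := by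
  have hU := hΦ.isOpen_nonstationarySet
  induction n with
  | zero =>
    intro ξ _
    simp [expansionCoeff, mderivIdx, mIdxList_zero, mderiv]
  | succ n ih =>
    intro ξ hξ
    have hdiff : ∀ {g : 𝔼 d → ℝ}, ContDiffOn ℝ ∞ g (nonstationarySet Φ V) →
        DifferentiableAt ℝ g ξ := fun hg =>
      (hg.contDiffAt (hU.mem_nhds hξ)).differentiableAt (by simp)
    have hA : ∀ i, DifferentiableAt ℝ (gradDivNormSq i Φ) ξ := fun i =>
      hdiff (((derivBoundUpTo_invNormSqGrad_gradDivNormSq 0).2 i).contDiffOn Φ V hΦ)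
    have hc : ∀ α, DifferentiableAt ℝ (expansionCoeff N n α Φ) ξ := fun α =>
      hdiff ((derivBoundUpTo_expansionCoeff N n α 0).contDiffOn Φ V hΦ)
    have hD : ∀ α, DifferentiableAt ℝ (mderivIdx d N α f) ξ := fun α => hdiff (hf.mderiv hU _)
    have hleibniz : ∀ i, pderiv' d i (fun η => gradDivNormSq i Φ η * (transpOp d Φ)^[n] f η) ξ =
        ∑ α, pderiv' d i (fun η => gradDivNormSq i Φ η * expansionCoeff N n α Φ η) ξ *
            mderivIdx d N α f ξ +
          ∑ α, gradDivNormSq i Φ ξ * expansionCoeff N n α Φ ξ *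
            pderiv' d i (mderivIdx d N α f) ξ := by
      intro i
      rw [pderiv'_congr_of_eventuallyEq (g := fun η => ∑ α,
          (gradDivNormSq i Φ η * expansionCoeff N n α Φ η) * mderivIdx d N α f η)
        (eventuallyEq_of_mem (hU.mem_nhds hξ) fun η hη => by
          simp only [ih (by omega) hη, mul_sum, mul_assoc]),
        pderiv'_sum univ (f := fun α η =>
          gradDivNormSq i Φ η * expansionCoeff N n α Φ η * mderivIdx d N α f η)
          fun α _ => ((hA i).mul (hc α)).mul (hD α), ← sum_add_distrib]
      exact sum_congr rfl fun α _ => pderiv'_mul ((hA i).mul (hc α)) (hD α) i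
    have hvanish : ∀ i β, gradDivNormSq i Φ ξ * expansionCoeff N n β Φ ξ ≠ 0 →
        mIdxDegree β < N := by
      intro i β hβ
      by_contra! h
      exact hβ (by rw [expansionCoeff_eq_zero (by omega), Pi.zero_apply, mul_zero])
    rw [Function.iterate_succ_apply']
    change ∑ i, pderiv' d i (fun η => gradDivNormSq i Φ η * (transpOp d Φ)^[n] f η) ξ = _
    simp only [hleibniz, sum_mul_pderiv'_mderivIdx hf hU hξ _ _ (hvanish _), expansionCoeff,
      sum_mul, add_mul, sum_add_distrib]
    congr 1 <;> exact sum_comm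

theorem exists_abs_mderiv_expansionCoeff_le (N : ℕ) (α : Fin d → Fin (N + 1))
    (β : List (Fin d)) :
    ∃ F : ℝ → ℝ, Monotone F ∧ 0 ≤ F ∧ ∀ Φ V, IsAdmissiblePhase Φ V →
      ∀ ξ ∈ nonstationarySet Φ V, |mderiv d β (expansionCoeff N N α Φ) ξ| ≤
        F (phaseSemi d (N - mIdxDegree α + β.length + 1) V Φ) *
          invPowSum ‖gradient Φ ξ‖ N (2 * N - mIdxDegree α + β.length) := by
  have h := derivBoundUpTo_expansionCoeff N N α β.length
  obtain ⟨F, hFm, hF0, hF⟩ := h.bound β.length le_rfl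
  refine ⟨F, hFm, hF0, fun Φ V hΦ ξ hξ => ?_⟩
  rw [Nat.add_right_comm]
  exact (abs_mderiv_le_norm_iteratedFDerivWithin (h.contDiffOn Φ V hΦ)
    hΦ.isOpen_nonstationarySet hξ β).trans (hF Φ V hΦ ξ hξ)

end Expansion

theorem stmt12_general (d N : ℕ) :
    ∃ F : (Fin d → Fin (N + 1)) → List (Fin d) → ℝ → ℝ,
      (∀ α β, Monotone (F α β) ∧ ∀ x, 0 ≤ F α β x) ∧
      ∀ (Φ : EuclideanSpace ℝ (Fin d) → ℝ) (V : Set (EuclideanSpace ℝ (Fin d))),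
        ContDiff ℝ (⊤ : ℕ∞) Φ → IsOpen V →
        (∀ k : ℕ, BddAbove ((fun ξ => ‖iteratedFDeriv ℝ k Φ ξ‖) '' V)) →
        ∃ c : (Fin d → Fin (N + 1)) → EuclideanSpace ℝ (Fin d) → ℝ,
          (∀ α, ContDiffOn ℝ (⊤ : ℕ∞) (c α) {ξ ∈ V | gradient Φ ξ ≠ 0}) ∧
          (∀ f : EuclideanSpace ℝ (Fin d) → ℝ,
            ContDiffOn ℝ (⊤ : ℕ∞) f {ξ ∈ V | gradient Φ ξ ≠ 0} →
            ∀ ξ ∈ {ξ ∈ V | gradient Φ ξ ≠ 0},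
              (transpOp d Φ)^[N] f ξ =
                ∑ α ∈ Finset.univ.filter
                    (fun α : Fin d → Fin (N + 1) => ∑ i, (α i : ℕ) ≤ N),
                  c α ξ * mderivIdx d N α f ξ) ∧
          (∀ α : Fin d → Fin (N + 1), ∑ i, (α i : ℕ) ≤ N →
            ∀ β : List (Fin d), ∀ ξ ∈ {ξ ∈ V | gradient Φ ξ ≠ 0},
              |mderiv d β (c α) ξ| ≤
                F α β (phaseSemi d (N - (∑ i, (α i : ℕ)) + β.length + 1) V Φ) *
                  ∑ k ∈ Finset.Icc N (2 * N - (∑ i, (α i : ℕ)) + β.length),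
                    (‖gradient Φ ξ‖ ^ k)⁻¹) := by
  choose F hFm hF0 hF using exists_abs_mderiv_expansionCoeff_le (d := d) N
  refine ⟨F, fun α β => ⟨hFm α β, hF0 α β⟩, fun Φ V hΦ hV hbdd => ?_⟩
  have hΦV : IsAdmissiblePhase Φ V := ⟨hΦ, hV, hbdd⟩
  refine ⟨fun α => expansionCoeff N N α Φ,
    fun α => (derivBoundUpTo_expansionCoeff N N α 0).contDiffOn Φ V hΦV,
    fun f hf ξ hξ => ?_, fun α _ β ξ hξ => hF α β Φ V hΦV ξ hξ⟩
  rw [iterate_transpOp_eqOn hΦV hf le_rfl hξ]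
  refine (sum_filter_of_ne fun α _ hα => ?_).symm
  by_contra! h
  exact hα (by rw [expansionCoeff_eq_zero h, Pi.zero_apply, zero_mul])

theorem stmt12 (d N : ℕ) (hN : 1 ≤ N) :
    ∃ F : (Fin d → Fin (N + 1)) → List (Fin d) → ℝ → ℝ,
      (∀ α β, Monotone (F α β) ∧ ∀ x, 0 ≤ F α β x) ∧
      ∀ (Φ : EuclideanSpace ℝ (Fin d) → ℝ) (V : Set (EuclideanSpace ℝ (Fin d))),
        ContDiff ℝ (⊤ : ℕ∞) Φ → IsOpen V →
        (∀ k : ℕ, BddAbove ((fun ξ => ‖iteratedFDeriv ℝ k Φ ξ‖) '' V)) →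
        ∃ c : (Fin d → Fin (N + 1)) → EuclideanSpace ℝ (Fin d) → ℝ,
          (∀ α, ContDiffOn ℝ (⊤ : ℕ∞) (c α) {ξ ∈ V | gradient Φ ξ ≠ 0}) ∧
          (∀ f : EuclideanSpace ℝ (Fin d) → ℝ,
            ContDiffOn ℝ (⊤ : ℕ∞) f {ξ ∈ V | gradient Φ ξ ≠ 0} →
            ∀ ξ ∈ {ξ ∈ V | gradient Φ ξ ≠ 0},
              (transpOp d Φ)^[N] f ξ =
                ∑ α ∈ Finset.univ.filter
                    (fun α : Fin d → Fin (N + 1) => ∑ i, (α i : ℕ) ≤ N),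
                  c α ξ * mderivIdx d N α f ξ) ∧
          (∀ α : Fin d → Fin (N + 1), ∑ i, (α i : ℕ) ≤ N →
            ∀ β : List (Fin d), ∀ ξ ∈ {ξ ∈ V | gradient Φ ξ ≠ 0},
              |mderiv d β (c α) ξ| ≤
                F α β (phaseSemi d (N - (∑ i, (α i : ℕ)) + β.length + 1) V Φ) *
                  ∑ k ∈ Finset.Icc N (2 * N - (∑ i, (α i : ℕ)) + β.length),
                    (‖gradient Φ ξ‖ ^ k)⁻¹) :=
  stmt12_general d N
end
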